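/- For every n : ℕ, every a in the level-n set Set.range (E^[n]), and every k : ℕ, iterating the map c ↦ Fadd n a c k times starting from the additive identity E^[n] 0 yields Fmul n a (E^[n] k); that is, (fun c => Fadd n a c)^[k] (E^[n] 0) = Fmul n a (E^[n] k). (This encodes the paper's Corollary that the regular hyperoperation a [n:2] b built from the successor S_n coincides with the commutative hyperoperation F_{n+1}(a,b).) -/

import Mathlib

/-- The exponential function `E a = w ^ a` on ℕ, for a fixed base `w`. -/
def E (w : ℕ) (a : ℕ) : ℕ := w ^ a

/-- Bennett's commutative hyperoperation `F_n` (level-`n` addition):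
`Fadd w n a b = E^[n] (L^[n] a + L^[n] b)` where `L = Nat.log w`. -/
def Fadd (w : ℕ) (n : ℕ) (a b : ℕ) : ℕ :=
  (E w)^[n] ((Nat.log w)^[n] a + (Nat.log w)^[n] b)

/-- Bennett's commutative hyperoperation `F_{n+1}` (level-`n` multiplication):
`Fmul w n a b = E^[n] (L^[n] a * L^[n] b)` where `L = Nat.log w`. -/
def Fmul (w : ℕ) (n : ℕ) (a b : ℕ) : ℕ :=
  (E w)^[n] ((Nat.log w)^[n] a * (Nat.log w)^[n] b)

theorem log_leftInverse_E {w : ℕ} (hw : 1 < w) : Function.LeftInverse (Nat.log w) (E w) :=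
  Nat.log_pow hw

theorem Fadd_E_iterate {w : ℕ} (hw : 1 < w) (n a b : ℕ) :
    Fadd w n ((E w)^[n] a) ((E w)^[n] b) = (E w)^[n] (a + b) := by
  simp only [Fadd, ((log_leftInverse_E hw).iterate n) _]

theorem Fmul_E_iterate {w : ℕ} (hw : 1 < w) (n a b : ℕ) :
    Fmul w n ((E w)^[n] a) ((E w)^[n] b) = (E w)^[n] (a * b) := by
  simp only [Fmul, ((log_leftInverse_E hw).iterate n) _]

/-- Iterating `c ↦ Fadd n a c` `k` times from the additive identity `E^[n] 0`
yields `Fmul n a (E^[n] k)`. -/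
theorem Fadd_iterate_eq_Fmul (w : ℕ) (hw : 2 ≤ w) (n : ℕ) :
    ∀ a ∈ Set.range ((E w)^[n]), ∀ k : ℕ,
      (fun c => Fadd w n a c)^[k] ((E w)^[n] 0) = Fmul w n a ((E w)^[n] k) := by
  rintro a ⟨m, rfl⟩ k
  rw [Fmul_E_iterate hw]
  induction k with
  | zero => rfl
  | succ k ih => rw [Function.iterate_succ_apply', ih, Fadd_E_iterate hw, Nat.mul_succ, add_comm]
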